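/- arXiv:1509.05892 — 3 statements merged into one kernel-verified Lean document; each statement's English description precedes it below -/
import Mathlib

section
/- Let q ∈ ℂ with 0 < |q| < 1, let a_1, a_2 ∈ ℂ with a_2 ≠ 0, and let k ∈ ℕ. Then the coefficient p_k in the (everywhere convergent) power series expansion (a_1 x, a_2 x; q)_∞ = ∑_{k≥0} p_k x^k is given by the terminating q-hypergeometric expression p_k = q^{k(k−1)/2} (−a_2)^k / (q; q)_k · ∑_{s=0}^{k} [ (q^{−k}; q)_s / (q; q)_s ] (−1)^s q^{s(s−1)/2} (q a_1/a_2)^s. -/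
/-!
Write `eₙ(a) = (-a)ⁿ q^{n(n-1)/2} / (q; q)ₙ`. The Euler series `G(x) = ∑ eₙ(a) xⁿ` is entire and
satisfies `G(x) = (1 - a x) G(q x)`; iterating, `G(x) = (a x; q)_N G(q^N x)`, and letting `N → ∞`
(`G(q^N x) → G(0) = 1`) gives Euler's identity `G(x) = (a x; q)_∞`. The Cauchy product of the two
Euler series and uniqueness of power-series coefficients give `p_k = ∑_{i+j=k} eᵢ(a₁) eⱼ(a₂)`.
Finally `(q; q)_{i+j} = (q; q)_j (q^{j+1}; q)_i` and the reflection
`(q^{-(i+j)}; q)_i = (-1)^i q^{i(i-1)/2 - (i+j) i} (q^{j+1}; q)_i` identify each summand with the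
corresponding term of the terminating `₁φ₁`.
-/

open Finset Filter Topology

section PowerSeries

variable {𝕜 : Type*} [NontriviallyNormedField 𝕜]

theorem hasFPowerSeriesOnBall_ofScalars_of_forall_hasSum {c : ℕ → 𝕜} {f : 𝕜 → 𝕜}
    (hf : ∀ x, HasSum (fun n => c n * x ^ n) (f x)) :
    HasFPowerSeriesOnBall f (FormalMultilinearSeries.ofScalars 𝕜 c) 0 ⊤ where
  r_le := by
    refine ENNReal.le_of_forall_pos_nnreal_lt fun r _ _ => ?_
    obtain ⟨x, hx⟩ := NormedField.exists_lt_norm 𝕜 r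
    refine le_trans (le_of_lt (by exact_mod_cast hx : (r : ENNReal) < ‖x‖₊))
      (FormalMultilinearSeries.le_radius_of_tendsto _ (l := 0) ?_)
    simpa [FormalMultilinearSeries.ofScalars_norm] using (hf x).summable.tendsto_atTop_zero.norm
  r_pos := ENNReal.zero_lt_top
  hasSum {x} _ := by
    simpa [FormalMultilinearSeries.ofScalars_apply_eq, mul_comm] using hf x

theorem eq_of_forall_hasSum_mul_pow {c c' : ℕ → 𝕜} {f : 𝕜 → 𝕜}
    (hc : ∀ x, HasSum (fun n => c n * x ^ n) (f x))
    (hc' : ∀ x, HasSum (fun n => c' n * x ^ n) (f x)) : c = c' :=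
  FormalMultilinearSeries.ofScalars_series_injective 𝕜 𝕜 <|
    HasFPowerSeriesAt.eq_formalMultilinearSeries
      (hasFPowerSeriesOnBall_ofScalars_of_forall_hasSum hc).hasFPowerSeriesAt
      (hasFPowerSeriesOnBall_ofScalars_of_forall_hasSum hc').hasFPowerSeriesAt

end PowerSeries

theorem HasSum.mul_pow_antidiagonal {R : Type*} [NormedCommRing R] [CompleteSpace R]
    {b c : ℕ → R} {x B C : R}
    (hb : HasSum (fun n => b n * x ^ n) B) (hc : HasSum (fun n => c n * x ^ n) C)
    (hb' : Summable fun n => ‖b n * x ^ n‖) (hc' : Summable fun n => ‖c n * x ^ n‖) :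
    HasSum (fun n => (∑ ij ∈ antidiagonal n, b ij.1 * c ij.2) * x ^ n) (B * C) := by
  rw [← hb.tsum_eq, ← hc.tsum_eq, tsum_mul_tsum_eq_tsum_sum_antidiagonal_of_summable_norm hb' hc']
  refine (summable_norm_sum_mul_antidiagonal_of_summable_norm hb' hc').of_norm.hasSum.congr_fun
    fun n => ?_
  rw [sum_mul]
  refine sum_congr rfl fun ij hij => ?_
  rw [← mem_antidiagonal.mp hij, pow_add]
  ring

theorem sum_range_id_mul_two_add (n : ℕ) : (∑ i ∈ range n, i) * 2 + n = n * n := by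
  induction n with
  | zero => rfl
  | succ n ih => rw [sum_range_succ]; linear_combination ih

def qPochhammer {R : Type*} [CommRing R] (a q : R) (n : ℕ) : R :=
  ∏ i ∈ range n, (1 - a * q ^ i)

section qPochhammer

variable {R : Type*} [CommRing R]

theorem qPochhammer_succ (a q : R) (n : ℕ) :
    qPochhammer a q (n + 1) = qPochhammer a q n * (1 - a * q ^ n) :=
  prod_range_succ _ n

theorem qPochhammer_add (a q : R) (m n : ℕ) :
    qPochhammer a q (m + n) = qPochhammer a q m * qPochhammer (a * q ^ m) q n := by
  simp only [qPochhammer, prod_range_add, pow_add, mul_assoc]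

theorem qPochhammer_ne_zero {K : Type*} [NormedField K] {a q : K} (ha : ‖a‖ < 1) (hq : ‖q‖ ≤ 1)
    (n : ℕ) : qPochhammer a q n ≠ 0 := by
  refine prod_ne_zero_iff.mpr fun i _ h => ?_
  have hnorm : ‖a * q ^ i‖ < 1 := by
    rw [norm_mul, norm_pow]
    exact mul_lt_one_of_nonneg_of_lt_one_left (norm_nonneg a) ha (pow_le_one₀ (norm_nonneg q) hq)
  rw [← eq_of_sub_eq_zero h, norm_one] at hnorm
  exact lt_irrefl 1 hnorm

theorem qPochhammer_zpow_neg {K : Type*} [Field K] {q : K} (hq : q ≠ 0) (i j : ℕ) :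
    qPochhammer (q ^ (-((i + j : ℕ) : ℤ))) q i =
      (-1) ^ i * q ^ (∑ l ∈ range i, l) / q ^ ((i + j) * i) * qPochhammer (q ^ (j + 1)) q i := by
  induction i with
  | zero => simp [qPochhammer]
  | succ i ih =>
    have hshift : ∀ l : ℕ, q ^ (-((i + 1 + j : ℕ) : ℤ)) * q ^ (l + 1) =
        q ^ (-((i + j : ℕ) : ℤ)) * q ^ l := by
      intro l
      simp only [zpow_neg, zpow_natCast]
      field_simp
      ring
    simp only [qPochhammer] at ih ⊢
    rw [prod_range_succ', prod_range_succ]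
    simp only [hshift]
    rw [ih]
    simp only [zpow_neg, zpow_natCast, sum_range_succ]
    field_simp
    ring

end qPochhammer

section EulerCoeff

variable {K : Type*} [Field K]

def eulerCoeff (q a : K) (n : ℕ) : K :=
  (-a) ^ n * q ^ (∑ i ∈ range n, i) / qPochhammer q q n

@[simp]
theorem eulerCoeff_zero (q a : K) : eulerCoeff q a 0 = 1 := by
  simp [eulerCoeff, qPochhammer]

-- If `1 - q ^ (n + 1) = 0` both sides are `0`, as `(q; q)ₙ₊₁ = 0` and `x / 0 = 0`.
theorem eulerCoeff_succ (q a : K) (n : ℕ) :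
    eulerCoeff q a (n + 1) = -a * q ^ n / (1 - q ^ (n + 1)) * eulerCoeff q a n := by
  rw [eulerCoeff, eulerCoeff, qPochhammer_succ, sum_range_succ, div_mul_div_comm]
  congr 1 <;> ring

theorem eulerCoeff_mul_eulerCoeff {q : K} (hq : q ≠ 0) (a₁ : K) {a₂ : K} (ha₂ : a₂ ≠ 0)
    {i j : ℕ} (hqq : qPochhammer q q (i + j) ≠ 0) :
    eulerCoeff q a₁ i * eulerCoeff q a₂ j =
      q ^ (∑ l ∈ range (i + j), l) * (-a₂) ^ (i + j) / qPochhammer q q (i + j) *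
        (qPochhammer (q ^ (-((i + j : ℕ) : ℤ))) q i / qPochhammer q q i *
          ((-1) ^ i * q ^ (∑ l ∈ range i, l) * (q * a₁ / a₂) ^ i)) := by
  have hsplit : qPochhammer q q (i + j) = qPochhammer q q j * qPochhammer (q ^ (j + 1)) q i := by
    rw [add_comm, qPochhammer_add, pow_succ']
  have hi : qPochhammer q q i ≠ 0 := by
    rw [qPochhammer_add] at hqq
    exact left_ne_zero_of_mul hqq
  rw [hsplit] at hqq
  obtain ⟨hj, hij⟩ := mul_ne_zero_iff.mp hqq
  have hexp : q ^ (∑ l ∈ range (i + j), l) * q ^ (∑ l ∈ range i, l) * q ^ i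
      = q ^ (∑ l ∈ range j, l) * q ^ ((i + j) * i) := by
    rw [← pow_add, ← pow_add, ← pow_add]
    congr 1
    rw [sum_range_add, sum_add_distrib, sum_const, card_range, smul_eq_mul]
    linear_combination sum_range_id_mul_two_add i
  have hsign : ((-1 : K) ^ i) ^ 2 = 1 := by rw [← pow_mul, pow_mul', neg_one_sq, one_pow]
  rw [qPochhammer_zpow_neg hq, hsplit, eulerCoeff, eulerCoeff, neg_pow a₁, pow_add, neg_pow a₂ i,
    div_pow, mul_pow]
  field_simp
  rw [hsign]
  linear_combination -(a₁ ^ i * (-a₂) ^ j) * hexp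

end EulerCoeff

section Euler

variable {𝕜 : Type*} [NontriviallyNormedField 𝕜] {q : 𝕜}

theorem one_sub_norm_le_norm_one_sub_pow (hq : ‖q‖ < 1) (n : ℕ) :
    1 - ‖q‖ ≤ ‖1 - q ^ (n + 1)‖ := by
  have hpow : ‖q ^ (n + 1)‖ ≤ ‖q‖ := by
    rw [norm_pow]
    exact pow_le_of_le_one (norm_nonneg q) hq.le n.succ_ne_zero
  linarith [norm_sub_norm_le (1 : 𝕜) (q ^ (n + 1)), norm_one (α := 𝕜)]

theorem summable_norm_eulerCoeff_mul_pow (hq : ‖q‖ < 1) (a x : 𝕜) :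
    Summable fun n => ‖eulerCoeff q a n * x ^ n‖ := by
  have hlim : Tendsto (fun n => ‖a * x‖ / (1 - ‖q‖) * ‖q‖ ^ n) atTop (𝓝 0) := by
    simpa using (tendsto_pow_atTop_nhds_zero_of_lt_one (norm_nonneg q) hq).const_mul
      (‖a * x‖ / (1 - ‖q‖))
  have hsmall := hlim.eventually_le_const (by norm_num : (0 : ℝ) < 1 / 2)
  refine summable_of_ratio_norm_eventually_le (by norm_num : (1 / 2 : ℝ) < 1) ?_
  filter_upwards [hsmall] with n hn
  rw [norm_norm, norm_norm]
  calc ‖eulerCoeff q a (n + 1) * x ^ (n + 1)‖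
      = ‖a * x‖ * ‖q‖ ^ n / ‖1 - q ^ (n + 1)‖ * ‖eulerCoeff q a n * x ^ n‖ := by
        rw [eulerCoeff_succ, pow_succ]
        simp only [norm_mul, norm_div, norm_neg, norm_pow]
        ring
    _ ≤ ‖a * x‖ * ‖q‖ ^ n / (1 - ‖q‖) * ‖eulerCoeff q a n * x ^ n‖ := by
        gcongr
        exact one_sub_norm_le_norm_one_sub_pow hq n
    _ = ‖a * x‖ / (1 - ‖q‖) * ‖q‖ ^ n * ‖eulerCoeff q a n * x ^ n‖ := by ring
    _ ≤ 1 / 2 * ‖eulerCoeff q a n * x ^ n‖ := by gcongr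

variable [CompleteSpace 𝕜]

noncomputable def eulerSeries (q a x : 𝕜) : 𝕜 := ∑' n, eulerCoeff q a n * x ^ n

theorem hasSum_eulerSeries (hq : ‖q‖ < 1) (a x : 𝕜) :
    HasSum (fun n => eulerCoeff q a n * x ^ n) (eulerSeries q a x) :=
  (summable_norm_eulerCoeff_mul_pow hq a x).of_norm.hasSum

theorem eulerSeries_eq_mul (hq : ‖q‖ < 1) (a x : 𝕜) :
    eulerSeries q a x = (1 - a * x) * eulerSeries q a (q * x) := by
  set S := eulerSeries q a (q * x)
  have hS := hasSum_eulerSeries hq a (q * x)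
  have htail : HasSum (fun n => eulerCoeff q a (n + 1) * (q * x) ^ (n + 1)) (S - 1) := by
    simpa only [sum_range_one, eulerCoeff_zero, pow_zero, mul_one] using
      (hasSum_nat_add_iff' 1).mpr hS
  have hshift : HasSum (fun n => eulerCoeff q a (n + 1) * x ^ (n + 1)) (S - 1 - a * x * S) := by
    refine (htail.sub (hS.mul_left (a * x))).congr_fun fun n => ?_
    have hne : 1 - q ^ (n + 1) ≠ 0 :=
      norm_pos_iff.mp ((sub_pos.mpr hq).trans_le (one_sub_norm_le_norm_one_sub_pow hq n))
    rw [eulerCoeff_succ]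
    field_simp
    ring
  rw [(hasSum_eulerSeries hq a x).unique ((hasSum_nat_add_iff 1).mp hshift), sum_range_one,
    eulerCoeff_zero, pow_zero, mul_one]
  ring

theorem eulerSeries_eq_prod_mul (hq : ‖q‖ < 1) (a x : 𝕜) (N : ℕ) :
    eulerSeries q a x = (∏ n ∈ range N, (1 - a * q ^ n * x)) * eulerSeries q a (q ^ N * x) := by
  induction N with
  | zero => simp
  | succ N ih =>
    rw [ih, eulerSeries_eq_mul hq a (q ^ N * x), prod_range_succ, pow_succ', mul_assoc q]
    ring

theorem tendsto_eulerSeries_pow_mul (hq : ‖q‖ < 1) (a x : 𝕜) :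
    Tendsto (fun N => eulerSeries q a (q ^ N * x)) atTop (𝓝 1) := by
  have hcont : ContinuousAt (eulerSeries q a) 0 :=
    (hasFPowerSeriesOnBall_ofScalars_of_forall_hasSum
      (hasSum_eulerSeries hq a)).hasFPowerSeriesAt.continuousAt
  have hzero : eulerSeries q a 0 = 1 := by
    rw [eulerSeries, tsum_eq_single 0 fun n hn => by simp [hn]]
    simp
  rw [← hzero]
  refine hcont.tendsto.comp ?_
  simpa using (tendsto_pow_atTop_nhds_zero_of_norm_lt_one hq).mul_const x

theorem multipliable_one_sub_mul_pow_mul (hq : ‖q‖ < 1) (a x : 𝕜) :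
    Multipliable fun n => 1 - a * q ^ n * x := by
  simp only [sub_eq_add_neg]
  refine multipliable_one_add_of_summable ?_
  simpa [norm_mul, mul_comm, mul_left_comm, mul_assoc] using
    (summable_geometric_of_lt_one (norm_nonneg q) hq).mul_left (‖a‖ * ‖x‖)

theorem hasSum_eulerCoeff_mul_pow (hq : ‖q‖ < 1) (a x : 𝕜) :
    HasSum (fun n => eulerCoeff q a n * x ^ n) (∏' n, (1 - a * q ^ n * x)) := by
  convert hasSum_eulerSeries hq a x using 1
  have hlim := ((multipliable_one_sub_mul_pow_mul hq a x).hasProd.tendsto_prod_nat).mul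
    (tendsto_eulerSeries_pow_mul hq a x)
  simp only [← eulerSeries_eq_prod_mul hq, mul_one] at hlim
  exact tendsto_nhds_unique hlim tendsto_const_nhds

end Euler

/-- the Taylor coefficients of the entire function `(a_1 x, a_2 x;q)_∞` are given by
a terminating `₁φ₁` expression (Stieltjes–Wigert polynomials). -/
theorem coeff_A2A1_generating_function_eq_1phi1
    (q : ℂ) (hq0 : 0 < ‖q‖) (hq1 : ‖q‖ < 1)
    (a1 a2 : ℂ) (ha2 : a2 ≠ 0)
    (k : ℕ)
    (poch : ℂ → ℕ → ℂ)
    (hpoch : ∀ (c : ℂ) (j : ℕ), poch c j = ∏ i ∈ Finset.range j, (1 - c * q ^ i))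
    (p : ℕ → ℂ)
    (hp : ∀ x : ℂ, HasSum (fun j : ℕ => p j * x ^ j)
        ((∏' n : ℕ, (1 - a1 * q ^ n * x)) * (∏' n : ℕ, (1 - a2 * q ^ n * x)))) :
    p k = q ^ (k * (k - 1) / 2) * (-a2) ^ k / poch q k *
      ∑ s ∈ Finset.range (k + 1),
        poch (q ^ (-(k : ℤ))) s / poch q s *
          ((-1) ^ s * q ^ (s * (s - 1) / 2) * (q * a1 / a2) ^ s) := by
  obtain rfl : poch = fun c j => qPochhammer c q j := funext₂ hpoch
  have hcoeff : p = fun n => ∑ ij ∈ antidiagonal n, eulerCoeff q a1 ij.1 * eulerCoeff q a2 ij.2 :=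
    eq_of_forall_hasSum_mul_pow hp fun x =>
      (hasSum_eulerCoeff_mul_pow hq1 a1 x).mul_pow_antidiagonal (hasSum_eulerCoeff_mul_pow hq1 a2 x)
        (summable_norm_eulerCoeff_mul_pow hq1 a1 x) (summable_norm_eulerCoeff_mul_pow hq1 a2 x)
  simp only [hcoeff, Nat.sum_antidiagonal_eq_sum_range_succ_mk, mul_sum, ← sum_range_id]
  refine sum_congr rfl fun s hs => ?_
  obtain ⟨j, rfl⟩ := Nat.exists_eq_add_of_le (mem_range_succ_iff.mp hs)
  rw [Nat.add_sub_cancel_left]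
  exact eulerCoeff_mul_eulerCoeff (norm_pos_iff.mp hq0) a1 ha2
    (qPochhammer_ne_zero hq1 hq1.le (s + j))
end

section
/- (Casorati determinant D_1, type q-D_5^{(1)}.) Suppose Y ∈ ℂ[[X]] satisfies (1−a_1X)(1−a_2X)·Y(qX) = (1−b_1X)(1−b_2X)·Y, and let (P, Q) be a Padé pair for Y. Then there exists a polynomial R ∈ ℂ[X] with deg R ≤ 1 such that (1−b_1X)(1−b_2X)·P(X)·Q(qX) − (1−a_1X)(1−a_2X)·P(qX)·Q(X) = X^{m+n+1}·R. -/
/-!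
Write `Y·Q - P = X^N·E` with `N = m + n + 1`, and let `A`, `B` be the two quadratic factors.
Modulo `X^N` one may replace `P` by `Y·Q` and `P(qX)` by `Y(qX)·Q(qX)`, and then the Casorati
combination becomes `(B·Y - A·Y(qX))·Q·Q(qX) = 0`. So the polynomial on the left is divisible
by `X^N`, and since its degree is at most `N + 1` the quotient has degree at most `1`.
-/

open Polynomial

namespace Polynomial

variable {R : Type*} [CommRing R]

theorem coe_comp_C_mul_X (p : R[X]) (r : R) :
    ((p.comp (C r * X) : R[X]) : PowerSeries R) = PowerSeries.rescale r (p : PowerSeries R) := by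
  ext k
  rw [coeff_coe, PowerSeries.coeff_rescale, coeff_coe, comp_C_mul_X_coeff, mul_comm]

theorem natDegree_comp_C_mul_X_le (p : R[X]) (r : R) :
    (p.comp (C r * X)).natDegree ≤ p.natDegree :=
  natDegree_le_iff_coeff_eq_zero.mpr fun k hk => by
    rw [comp_C_mul_X_coeff, coeff_eq_zero_of_natDegree_lt hk, zero_mul]

theorem coe_X_pow_dvd_coe_iff {p : R[X]} {n : ℕ} :
    (PowerSeries.X ^ n ∣ (p : PowerSeries R)) ↔ X ^ n ∣ p := by
  simp only [PowerSeries.X_pow_dvd_iff, X_pow_dvd_iff, coeff_coe]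

theorem exists_eq_X_pow_mul_of_natDegree_le {p : R[X]} {n k : ℕ} (hdvd : X ^ n ∣ p)
    (hp : p.natDegree ≤ n + k) : ∃ r : R[X], r.degree ≤ k ∧ p = X ^ n * r := by
  obtain ⟨r, rfl⟩ := hdvd
  refine ⟨r, (degree_le_iff_coeff_zero r k).mpr fun j hj => ?_, rfl⟩
  have hkj : k < j := by exact_mod_cast hj
  rw [← coeff_X_pow_mul r n j]
  exact coeff_eq_zero_of_natDegree_lt (by omega)

end Polynomial

namespace PowerSeries

variable {R : Type*} [CommRing R]

theorem X_pow_dvd_rescale {f : PowerSeries R} {n : ℕ} (a : R) (h : X ^ n ∣ f) :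
    X ^ n ∣ rescale a f := by
  obtain ⟨g, rfl⟩ := h
  exact ⟨C a ^ n * rescale a g, by rw [map_mul, map_pow, rescale_X]; ring⟩

theorem X_pow_dvd_casorati {A B Y P Q : PowerSeries R} {a : R} {n : ℕ}
    (hY : A * rescale a Y = B * Y) (hPade : X ^ n ∣ Y * Q - P) :
    X ^ n ∣ B * P * rescale a Q - A * rescale a P * Q := by
  have hsplit : B * P * rescale a Q - A * rescale a P * Q =
      A * Q * rescale a (Y * Q - P) - B * rescale a Q * (Y * Q - P) := by
    rw [map_sub, map_mul]
    linear_combination -(Q * rescale a Q) * hY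
  rw [hsplit]
  exact dvd_sub ((X_pow_dvd_rescale a hPade).mul_left _) (hPade.mul_left _)

end PowerSeries

/-- Casorati determinant `D_1` for type q-D_5^{(1)}. -/
theorem casorati_D1_qD5
    (q a1 a2 b1 b2 : ℂ) (m n : ℕ)
    (Y : PowerSeries ℂ)
    (hY : (1 - PowerSeries.C a1 * PowerSeries.X) * (1 - PowerSeries.C a2 * PowerSeries.X) *
        PowerSeries.rescale q Y =
      (1 - PowerSeries.C b1 * PowerSeries.X) * (1 - PowerSeries.C b2 * PowerSeries.X) * Y)
    (P Q : Polynomial ℂ) (hdP : P.degree ≤ m) (hdQ : Q.degree ≤ n)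
    (hPade : (PowerSeries.X : PowerSeries ℂ) ^ (m + n + 1) ∣
      Y * (Q : PowerSeries ℂ) - (P : PowerSeries ℂ)) :
    ∃ R : Polynomial ℂ, R.degree ≤ 1 ∧
      (1 - C b1 * X) * (1 - C b2 * X) * P * (Q.comp (C q * X)) -
          (1 - C a1 * X) * (1 - C a2 * X) * (P.comp (C q * X)) * Q =
        X ^ (m + n + 1) * R := by
  apply exists_eq_X_pow_mul_of_natDegree_le (k := 1)
  · rw [← coe_X_pow_dvd_coe_iff]
    push_cast [coe_comp_C_mul_X]
    exact PowerSeries.X_pow_dvd_casorati hY hPade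
  · have hlin (c d : ℂ) : ((1 - C c * X) * (1 - C d * X)).natDegree ≤ 2 := by compute_degree
    have hP := natDegree_le_of_degree_le hdP
    have hQ := natDegree_le_of_degree_le hdQ
    have hPq := (natDegree_comp_C_mul_X_le P q).trans hP
    have hQq := (natDegree_comp_C_mul_X_le Q q).trans hQ
    have hB := natDegree_mul_le_of_le (natDegree_mul_le_of_le (hlin b1 b2) hP) hQq
    have hA := natDegree_mul_le_of_le (natDegree_mul_le_of_le (hlin a1 a2) hPq) hQ
    exact (natDegree_sub_le_of_le hB hA).trans (by omega)
end

section
/- (Casorati determinant D_2, type q-D_5^{(1)}.) Suppose Y, Ȳ ∈ ℂ[[X]] satisfy (1−a_1X)·Ȳ = (1−b_1X)·Y, let (P, Q) be a Padé pair for Y and (P̄, Q̄) a Padé pair for Ȳ. Then there exists a constant c ∈ ℂ such that (1−b_1X)·P·Q̄ − (1−a_1X)·P̄·Q = c·X^{m+n+1}. -/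
/-!
Cross-multiplying the two Padé relations and using `(1 - a₁X) Ȳ = (1 - b₁X) Y` to cancel the
series shows that `X^{m+n+1}` divides the polynomial `(1 - b₁X) P Q̄ - (1 - a₁X) P̄ Q`, whose degree
is at most `m + n + 1`; such a polynomial is a constant multiple of `X^{m+n+1}`.
-/

open Polynomial

theorem dvd_cross_sub_of_dvd_sub {R : Type*} [CommRing R] {d Y Ybar A B P Q Pbar Qbar : R}
    (hYY : A * Ybar = B * Y) (h : d ∣ Y * Q - P) (hbar : d ∣ Ybar * Qbar - Pbar) :
    d ∣ B * P * Qbar - A * Pbar * Q := by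
  have hexpand : B * P * Qbar - A * Pbar * Q =
      -(B * Qbar) * (Y * Q - P) + A * Q * (Ybar * Qbar - Pbar) := by
    linear_combination -(Q * Qbar) * hYY
  rw [hexpand]
  exact dvd_add (h.mul_left _) (hbar.mul_left _)

namespace Polynomial

variable {R : Type*}

theorem X_pow_dvd_coe_iff [Semiring R] {p : R[X]} {n : ℕ} :
    PowerSeries.X ^ n ∣ (p : PowerSeries R) ↔ X ^ n ∣ p := by
  simp only [PowerSeries.X_pow_dvd_iff, X_pow_dvd_iff, coeff_coe]

theorem eq_C_mul_X_pow_of_X_pow_dvd [Semiring R] {p : R[X]} {n : ℕ} (hdeg : p.degree ≤ n)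
    (hdvd : X ^ n ∣ p) : p = C (p.coeff n) * X ^ n := by
  ext k
  rw [coeff_C_mul_X_pow]
  rcases lt_trichotomy k n with hk | rfl | hk
  · rw [X_pow_dvd_iff.mp hdvd k hk, if_neg hk.ne]
  · rw [if_pos rfl]
  · rw [if_neg hk.ne', coeff_eq_zero_of_degree_lt (hdeg.trans_lt (by exact_mod_cast hk))]

theorem degree_one_sub_C_mul_X_mul_mul_le [Ring R] (a : R) {P Q : R[X]} {m n : ℕ}
    (hP : P.degree ≤ m) (hQ : Q.degree ≤ n) :
    ((1 - C a * X) * P * Q).degree ≤ ↑(m + n + 1) := by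
  have hlin : (1 - C a * X).degree ≤ 1 := by compute_degree
  calc ((1 - C a * X) * P * Q).degree
      ≤ 1 + (m : WithBot ℕ) + n := degree_mul_le_of_le (degree_mul_le_of_le hlin hP) hQ
    _ = ↑(m + n + 1) := by push_cast; ring

end Polynomial

theorem casorati_D2_qD5_general
    (a1 b1 : ℂ) (m n : ℕ)
    (Y Ybar : PowerSeries ℂ)
    (hYY : (1 - PowerSeries.C a1 * PowerSeries.X) * Ybar =
      (1 - PowerSeries.C b1 * PowerSeries.X) * Y)
    (P Q : Polynomial ℂ) (hdP : P.degree ≤ m) (hdQ : Q.degree ≤ n)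
    (hPade : (PowerSeries.X : PowerSeries ℂ) ^ (m + n + 1) ∣
      Y * (Q : PowerSeries ℂ) - (P : PowerSeries ℂ))
    (Pbar Qbar : Polynomial ℂ) (hdPbar : Pbar.degree ≤ m) (hdQbar : Qbar.degree ≤ n)
    (hPadebar : (PowerSeries.X : PowerSeries ℂ) ^ (m + n + 1) ∣
      Ybar * (Qbar : PowerSeries ℂ) - (Pbar : PowerSeries ℂ)) :
    ∃ c : ℂ,
      (1 - C b1 * X) * P * Qbar - (1 - C a1 * X) * Pbar * Q =
        C c * X ^ (m + n + 1) := by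
  set D := (1 - C b1 * X) * P * Qbar - (1 - C a1 * X) * Pbar * Q
  have hdvd : X ^ (m + n + 1) ∣ D := by
    rw [← X_pow_dvd_coe_iff]
    push_cast [D]
    exact dvd_cross_sub_of_dvd_sub hYY hPade hPadebar
  have hdeg : D.degree ≤ ↑(m + n + 1) :=
    (degree_sub_le _ _).trans (max_le (degree_one_sub_C_mul_X_mul_mul_le b1 hdP hdQbar)
      (degree_one_sub_C_mul_X_mul_mul_le a1 hdPbar hdQ))
  exact ⟨D.coeff (m + n + 1), eq_C_mul_X_pow_of_X_pow_dvd hdeg hdvd⟩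

/-- Casorati determinant `D_2` for type q-D_5^{(1)}. -/
theorem casorati_D2_qD5
    (q a1 a2 b1 b2 : ℂ) (m n : ℕ)
    (Y Ybar : PowerSeries ℂ)
    (hYY : (1 - PowerSeries.C a1 * PowerSeries.X) * Ybar =
      (1 - PowerSeries.C b1 * PowerSeries.X) * Y)
    (P Q : Polynomial ℂ) (hdP : P.degree ≤ m) (hdQ : Q.degree ≤ n)
    (hPade : (PowerSeries.X : PowerSeries ℂ) ^ (m + n + 1) ∣
      Y * (Q : PowerSeries ℂ) - (P : PowerSeries ℂ))
    (Pbar Qbar : Polynomial ℂ) (hdPbar : Pbar.degree ≤ m) (hdQbar : Qbar.degree ≤ n)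
    (hPadebar : (PowerSeries.X : PowerSeries ℂ) ^ (m + n + 1) ∣
      Ybar * (Qbar : PowerSeries ℂ) - (Pbar : PowerSeries ℂ)) :
    ∃ c : ℂ,
      (1 - C b1 * X) * P * Qbar - (1 - C a1 * X) * Pbar * Q =
        C c * X ^ (m + n + 1) :=
  casorati_D2_qD5_general a1 b1 m n Y Ybar hYY P Q hdP hdQ hPade Pbar Qbar hdPbar hdQbar hPadebar
end
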